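/- arXiv:1511.07699 — 6 statements merged into one kernel-verified Lean document; each statement's English description precedes it below -/
import Mathlib

section
/- Let 𝒟 be an additive ℂ-linear rigid symmetric monoidal category, 𝒱 a tensor category, and I : 𝒟 → 𝒱 a ℂ-linear symmetric monoidal functor satisfying assumptions (1)–(3). Let F : 𝒟 → 𝒜 be a faithful ℂ-linear symmetric monoidal functor into a tensor category 𝒜. If (U, θ) and (U′, θ′) are two pairs consisting of an exact symmetric monoidal functor 𝒱 → 𝒜 and a monoidal natural isomorphism θ : U ∘ I ≅ F (resp. θ′ : U′ ∘ I ≅ F), then there exists a unique monoidal natural isomorphism φ : U ≅ U′ such that θ′_X ∘ φ_{I(X)} = θ_X for every object X of 𝒟. (Uniqueness part of the main universality theorem: the groupoid of such lifts is contractible.) -/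
/-!
Every object `M` of `V` is the image of some `I.map f`, hence comes with an epimorphism
`e : I P ⟶ M` and a monomorphism `m : M ⟶ I Q` whose composite lies in the image of the full
functor `I`. Exact functors keep `e` epi and `m` mono, so in the commutative square formed by
`U e`, `U' m` and the comparison `θ'⁻¹ ∘ θ` the component `φ_M` is forced to be the diagonal
fill-in: this gives existence and uniqueness at once. Monoidality of `φ` is checked after
precomposing with `U e ⊗ U e'`, which is an epimorphism because tensoring in the rigid category
`A` has adjoints on both sides.
-/

open CategoryTheory CategoryTheory.Limits CategoryTheory.MonoidalCategory

namespace CategoryTheory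

section Rigid

variable {C : Type*} [Category C] [MonoidalCategory C]

theorem MonoidalCategory.epi_whiskerLeft (X : C) [HasLeftDual X] {Y Z : C} (f : Y ⟶ Z) [Epi f] :
    Epi (X ◁ f) :=
  have := Functor.preservesEpimorphisms_of_adjunction (tensorLeftAdjunction (ᘁX) X)
  (tensorLeft X).map_epi f

theorem MonoidalCategory.epi_whiskerRight {Y Z : C} (f : Y ⟶ Z) [Epi f] (X : C) [HasRightDual X] :
    Epi (f ▷ X) :=
  have := Functor.preservesEpimorphisms_of_adjunction (tensorRightAdjunction X (Xᘁ))
  (tensorRight X).map_epi f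

theorem MonoidalCategory.epi_tensorHom [RigidCategory C] {Y Z Y' Z' : C} (f : Y ⟶ Z) (g : Y' ⟶ Z')
    [Epi f] [Epi g] : Epi (f ⊗ₘ g) := by
  have := epi_whiskerRight f Y'
  have := epi_whiskerLeft Z g
  rw [tensorHom_def]
  exact epi_comp _ _

end Rigid

section Extension

variable {C V A : Type*} [Category C] [Category V] [Category A] {I : C ⥤ V} {U U' : V ⥤ A}

theorem NatTrans.naturality_of_full [I.Full] (a : I ⋙ U ⟶ I ⋙ U') {P Q : C}
    (g : I.obj P ⟶ I.obj Q) : U.map g ≫ a.app Q = a.app P ≫ U'.map g := by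
  obtain ⟨g, rfl⟩ := I.map_surjective g
  exact a.naturality g

theorem NatTrans.ext_of_app_obj [U.PreservesEpimorphisms]
    (hI : ∀ M, ∃ (P : C) (e : I.obj P ⟶ M), Epi e) {τ τ' : U ⟶ U'}
    (h : ∀ X, τ.app (I.obj X) = τ'.app (I.obj X)) : τ = τ' := by
  ext M
  obtain ⟨P, e, he⟩ := hI M
  rw [← cancel_epi (U.map e), τ.naturality, τ'.naturality, h]

theorem exists_whiskerLeft_eq [Abelian A] [I.Full] [U.PreservesEpimorphisms]
    [U'.PreservesMonomorphisms]
    (hI : ∀ M, ∃ (P Q : C) (e : I.obj P ⟶ M) (m : M ⟶ I.obj Q), Epi e ∧ Mono m)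
    (a : I ⋙ U ⟶ I ⋙ U') : ∃ τ : U ⟶ U', Functor.whiskerLeft I τ = a := by
  choose P Q e m he hm using hI
  have sq : ∀ M, CommSq (a.app (P M) ≫ U'.map (e M)) (U.map (e M)) (U'.map (m M))
      (U.map (m M) ≫ a.app (Q M)) := fun M =>
    ⟨by simp only [Category.assoc, ← Functor.map_comp_assoc, ← U'.map_comp,
      NatTrans.naturality_of_full]⟩
  have := fun M => strongEpi_of_epi (U.map (e M))
  refine ⟨{ app := fun M => (sq M).lift, naturality := fun M N h => ?_ }, ?_⟩
  · rw [← cancel_epi (U.map (e M)), ← cancel_mono (U'.map (m N))]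
    simp only [Category.assoc, (sq N).fac_right, (sq M).fac_left_assoc, ← U.map_comp_assoc,
      ← U'.map_comp, NatTrans.naturality_of_full]
  · ext X
    rw [Functor.whiskerLeft_app, ← cancel_epi (U.map (e (I.obj X))), (sq _).fac_left,
      NatTrans.naturality_of_full]

theorem exists_isoWhiskerLeft_eq [Abelian A] [I.Full] [U.PreservesEpimorphisms]
    [U.PreservesMonomorphisms] [U'.PreservesEpimorphisms] [U'.PreservesMonomorphisms]
    (hI : ∀ M, ∃ (P Q : C) (e : I.obj P ⟶ M) (m : M ⟶ I.obj Q), Epi e ∧ Mono m)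
    (a : I ⋙ U ≅ I ⋙ U') : ∃ φ : U ≅ U', Functor.isoWhiskerLeft I φ = a := by
  have hI' : ∀ M, ∃ (P : C) (e : I.obj P ⟶ M), Epi e := fun M =>
    let ⟨P, _, e, _, he, _⟩ := hI M; ⟨P, e, he⟩
  obtain ⟨τ, hτ⟩ := exists_whiskerLeft_eq hI a.hom
  obtain ⟨σ, hσ⟩ := exists_whiskerLeft_eq hI a.inv
  refine ⟨⟨τ, σ, ?_, ?_⟩, Iso.ext hτ⟩ <;> refine NatTrans.ext_of_app_obj hI' fun X => ?_
  · simpa [← hτ, ← hσ] using a.hom_inv_id_app X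
  · simpa [← hτ, ← hσ] using a.inv_hom_id_app X

end Extension

section Monoidal

open Functor.LaxMonoidal

variable {C V A : Type*} [Category C] [Category V] [Category A] [MonoidalCategory C]
  [MonoidalCategory V] [MonoidalCategory A] {I : C ⥤ V} {U U' : V ⥤ A} [I.Monoidal]
  [U.LaxMonoidal] [U'.LaxMonoidal]

theorem NatTrans.IsMonoidal.of_whiskerLeft [RigidCategory A] [U.PreservesEpimorphisms]
    (hI : ∀ M, ∃ (P : C) (e : I.obj P ⟶ M), Epi e) (τ : U ⟶ U')
    [IsMonoidal (Functor.whiskerLeft I τ)] : IsMonoidal τ where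
  unit := by
    have h := unit (τ := Functor.whiskerLeft I τ)
    rw [← cancel_mono (U'.map (ε I))]
    simpa [comp_ε, τ.naturality] using h
  tensor M N := by
    obtain ⟨P, e, he⟩ := hI M
    obtain ⟨Q, e', he'⟩ := hI N
    have := epi_tensorHom (U.map e) (U.map e')
    have hPQ : μ U (I.obj P) (I.obj Q) ≫ τ.app _ = (τ.app _ ⊗ₘ τ.app _) ≫ μ U' _ _ := by
      rw [← cancel_mono (U'.map (μ I P Q))]
      simpa [τ.naturality] using tensor (τ := Functor.whiskerLeft I τ) P Q
    rw [← cancel_epi (U.map e ⊗ₘ U.map e'), μ_natural_assoc, τ.naturality, reassoc_of% hPQ,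
      tensorHom_comp_tensorHom_assoc, τ.naturality, τ.naturality,
      ← tensorHom_comp_tensorHom_assoc, μ_natural]

end Monoidal

end CategoryTheory

universe v₁ v₂ v₃ u₁ u₂ u₃

theorem deligne_universality_uniqueness_general
    {D : Type u₁} [Category.{v₁} D]
    [MonoidalCategory D] [SymmetricCategory D]
    {V : Type u₂} [Category.{v₂} V] [Abelian V]
    [MonoidalCategory V] [SymmetricCategory V]
    (I : D ⥤ V) [I.Braided] [I.Full]
    (h2 : ∀ M : V, ∃ (P Q : D) (f : P ⟶ Q), Nonempty (image (I.map f) ≅ M))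
    {A : Type u₃} [Category.{v₃} A] [Abelian A]
    [MonoidalCategory A] [SymmetricCategory A] [RigidCategory A]
    (F : D ⥤ A) [F.Braided]
    (U : V ⥤ A) [U.Braided] [PreservesFiniteLimits U] [PreservesFiniteColimits U]
    (U' : V ⥤ A) [U'.Braided] [PreservesFiniteLimits U'] [PreservesFiniteColimits U']
    (θ : I ⋙ U ≅ F) [NatTrans.IsMonoidal θ.hom]
    (θ' : I ⋙ U' ≅ F) [NatTrans.IsMonoidal θ'.hom] :
    ∃! φ : U ≅ U', NatTrans.IsMonoidal φ.hom ∧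
      ∀ X : D, φ.hom.app (I.obj X) ≫ θ'.hom.app X = θ.hom.app X := by
  have hquot : ∀ M, ∃ (P Q : D) (e : I.obj P ⟶ M) (m : M ⟶ I.obj Q), Epi e ∧ Mono m := fun M =>
    let ⟨P, Q, f, ⟨i⟩⟩ := h2 M
    ⟨P, Q, factorThruImage (I.map f) ≫ i.hom, i.inv ≫ image.ι _, inferInstance, inferInstance⟩
  have hepi : ∀ M, ∃ (P : D) (e : I.obj P ⟶ M), Epi e := fun M =>
    let ⟨P, _, e, _, he, _⟩ := hquot M
    ⟨P, e, he⟩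
  obtain ⟨φ, hφ⟩ := exists_isoWhiskerLeft_eq hquot (θ ≪≫ θ'.symm)
  have hφθ : ∀ X, φ.hom.app (I.obj X) ≫ θ'.hom.app X = θ.hom.app X := fun X => by
    simpa using congr_arg (fun α => α.hom.app X ≫ θ'.hom.app X) hφ
  have : NatTrans.IsMonoidal (Functor.whiskerLeft I φ.hom) := by
    rw [← Functor.isoWhiskerLeft_hom, hφ]
    exact inferInstanceAs (NatTrans.IsMonoidal (θ.hom ≫ θ'.inv))
  refine ⟨φ, ⟨.of_whiskerLeft hepi φ.hom, hφθ⟩, fun ψ ⟨_, hψ⟩ =>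
    Iso.ext (NatTrans.ext_of_app_obj hepi fun X => ?_)⟩
  rw [← cancel_mono (θ'.hom.app X), hψ, hφθ]

theorem deligne_universality_uniqueness
    {D : Type u₁} [Category.{v₁} D] [Preadditive D] [CategoryTheory.Linear ℂ D]
    [HasFiniteBiproducts D] [MonoidalCategory D] [SymmetricCategory D]
    [MonoidalPreadditive D] [MonoidalLinear ℂ D] [RigidCategory D]
    {V : Type u₂} [Category.{v₂} V] [Abelian V] [CategoryTheory.Linear ℂ V]
    [MonoidalCategory V] [SymmetricCategory V] [MonoidalPreadditive V]
    [MonoidalLinear ℂ V] [RigidCategory V]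
    (hV : Function.Bijective fun c : ℂ => c • (𝟙 (𝟙_ V)))
    (I : D ⥤ V) [I.Braided] [I.Additive] [I.Linear ℂ] [I.Full] [I.Faithful]
    (h2 : ∀ M : V, ∃ (P Q : D) (f : P ⟶ Q), Nonempty (image (I.map f) ≅ M))
    (h3e : ∀ ⦃X Y : V⦄ (g : X ⟶ Y), Epi g →
      ∃ T : D, ¬ IsZero T ∧ IsSplitEpi (g ▷ I.obj T))
    (h3m : ∀ ⦃X Y : V⦄ (g : X ⟶ Y), Mono g →
      ∃ T : D, ¬ IsZero T ∧ IsSplitMono (g ▷ I.obj T))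
    {A : Type u₃} [Category.{v₃} A] [Abelian A] [CategoryTheory.Linear ℂ A]
    [MonoidalCategory A] [SymmetricCategory A] [MonoidalPreadditive A]
    [MonoidalLinear ℂ A] [RigidCategory A]
    (hA : Function.Bijective fun c : ℂ => c • (𝟙 (𝟙_ A)))
    (F : D ⥤ A) [F.Braided] [F.Additive] [F.Linear ℂ] [F.Faithful]
    (U : V ⥤ A) [U.Braided] [PreservesFiniteLimits U] [PreservesFiniteColimits U]
    (U' : V ⥤ A) [U'.Braided] [PreservesFiniteLimits U'] [PreservesFiniteColimits U']
    (θ : I ⋙ U ≅ F) [NatTrans.IsMonoidal θ.hom]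
    (θ' : I ⋙ U' ≅ F) [NatTrans.IsMonoidal θ'.hom] :
    ∃! φ : U ≅ U', NatTrans.IsMonoidal φ.hom ∧
      ∀ X : D, φ.hom.app (I.obj X) ≫ θ'.hom.app X = θ.hom.app X :=
  deligne_universality_uniqueness_general I h2 F U U' θ θ'
end

section
/- Let 𝒟 be an additive ℂ-linear rigid symmetric monoidal category, 𝒱 a tensor category, and I : 𝒟 → 𝒱 a ℂ-linear symmetric monoidal functor satisfying assumptions (1)–(3). Then for every pre-exact additive ℂ-linear functor F : 𝒟 → 𝒜 into an abelian ℂ-linear category 𝒜, there exists a pre-exact additive functor U : 𝒱 → 𝒜 (i.e. one preserving monomorphisms and epimorphisms) together with a natural isomorphism θ : U ∘ I ≅ F. (Existence part of the pre-exact universality theorem.) -/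
/-!
Write every `M : V` as the image of `I f_M` with `f_M : P_M ⟶ Q_M` in `D`, and set
`U M := image (F f_M)`. By fullness, `α : M ⟶ N` lifts to `γ_α : P_M ⟶ Q_N` with `I γ_α` the
composite `I P_M ↠ M ⟶ N ↪ I Q_N`, and `U α` is the map of images induced by `F γ_α`.
Covering the pullback of `I P_M ⟶ N ↞ I P_N` by an object of `D` gives `ζ` with `I ζ` epi and
`ζ ≫ γ_α = θ ≫ f_N`; dually, embedding a pushout into an object of `D` gives `χ` with `I χ`
mono and `γ_α ≫ χ = f_M ≫ χ'`. As `F` is pre-exact, `F ζ` is epi and `F χ` mono, so `F γ_α`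
kills the kernel of `F f_M` and lands in the image of `F f_N`. The same squares give
functoriality, and when `α` is epi (mono) they have `I θ` epi (`I χ'` mono), which makes `U α`
epi (mono). On `I X` the presentation factors `F f` through `F X` as an epi followed by a mono,
so `U (I X) ≅ F X`.
-/

open CategoryTheory CategoryTheory.Limits CategoryTheory.MonoidalCategory

universe v₁ v₂ v₃ u₁ u₂ u₃

namespace CategoryTheory.Abelian

variable {C : Type*} [Category C] [Abelian C]

section InducedImageMap

variable {P Q P' Q' : C} (f : P ⟶ Q) (f' : P' ⟶ Q') (g : P ⟶ Q')

noncomputable def inducedImageMap (hker : kernel.ι f ≫ g = 0) (hcoker : g ≫ cokernel.π f' = 0) :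
    Abelian.image f ⟶ Abelian.image f' :=
  epiDesc (Abelian.factorThruImage f) (kernel.lift _ g hcoker) <| by
    have hf := kernel.condition_assoc (Abelian.factorThruImage f) (Abelian.image.ι f)
    rw [Abelian.image.fac, zero_comp] at hf
    rw [← cancel_mono (kernel.ι (cokernel.π f')), Category.assoc, kernel.lift_ι, zero_comp,
      ← kernel.lift_ι f _ hf, Category.assoc, hker, comp_zero]

variable {f f' g} {hker : kernel.ι f ≫ g = 0} {hcoker : g ≫ cokernel.π f' = 0}

@[simp]
theorem factorThruImage_inducedImageMap_ι :
    Abelian.factorThruImage f ≫ inducedImageMap f f' g hker hcoker ≫ Abelian.image.ι f' = g := by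
  rw [← Category.assoc, inducedImageMap, comp_epiDesc, kernel.lift_ι]

theorem eq_inducedImageMap {u : Abelian.image f ⟶ Abelian.image f'}
    (hu : Abelian.factorThruImage f ≫ u ≫ Abelian.image.ι f' = g) :
    u = inducedImageMap f f' g hker hcoker := by
  rw [← cancel_mono (Abelian.image.ι f'), ← cancel_epi (Abelian.factorThruImage f), hu,
    factorThruImage_inducedImageMap_ι]

theorem comp_factorThruImage_inducedImageMap {Z : C} {e : Z ⟶ P} {h : Z ⟶ P'}
    (w : e ≫ g = h ≫ f') :
    e ≫ Abelian.factorThruImage f ≫ inducedImageMap f f' g hker hcoker =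
      h ≫ Abelian.factorThruImage f' := by
  rw [← cancel_mono (Abelian.image.ι f'), Category.assoc, Category.assoc,
    factorThruImage_inducedImageMap_ι, w, Category.assoc, Abelian.image.fac]

theorem inducedImageMap_ι_comp {Z : C} {χ : Q' ⟶ Z} {χ' : Q ⟶ Z} (w : g ≫ χ = f ≫ χ') :
    inducedImageMap f f' g hker hcoker ≫ Abelian.image.ι f' ≫ χ = Abelian.image.ι f ≫ χ' := by
  rw [← cancel_epi (Abelian.factorThruImage f)]
  calc _ = (Abelian.factorThruImage f ≫ inducedImageMap f f' g hker hcoker ≫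
        Abelian.image.ι f') ≫ χ := by simp only [Category.assoc]
    _ = _ := by rw [factorThruImage_inducedImageMap_ι, w, ← Category.assoc, Abelian.image.fac]

theorem epi_inducedImageMap {Z : C} {e : Z ⟶ P} {h : Z ⟶ P'} [Epi h] (w : e ≫ g = h ≫ f') :
    Epi (inducedImageMap f f' g hker hcoker) := by
  have : Epi ((e ≫ Abelian.factorThruImage f) ≫ inducedImageMap f f' g hker hcoker) := by
    rw [Category.assoc, comp_factorThruImage_inducedImageMap w]
    infer_instance
  exact epi_of_epi (e ≫ Abelian.factorThruImage f) _

theorem mono_inducedImageMap {Z : C} {χ : Q' ⟶ Z} {χ' : Q ⟶ Z} [Mono χ'] (w : g ≫ χ = f ≫ χ') :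
    Mono (inducedImageMap f f' g hker hcoker) := by
  have : Mono (inducedImageMap f f' g hker hcoker ≫ Abelian.image.ι f' ≫ χ) := by
    rw [inducedImageMap_ι_comp w]
    infer_instance
  exact mono_of_mono _ (Abelian.image.ι f' ≫ χ)

end InducedImageMap

theorem kernel_ι_comp_eq_zero_of_comp_eq {P Q Q' Z : C} {f : P ⟶ Q} {g : P ⟶ Q'}
    {χ : Q' ⟶ Z} {χ' : Q ⟶ Z} [Mono χ] (w : g ≫ χ = f ≫ χ') : kernel.ι f ≫ g = 0 := by
  rw [← cancel_mono χ, Category.assoc, w, kernel.condition_assoc, zero_comp, zero_comp]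

theorem comp_cokernel_π_eq_zero_of_comp_eq {P P' Q' Z : C} {f' : P' ⟶ Q'} {g : P ⟶ Q'}
    {e : Z ⟶ P} {h : Z ⟶ P'} [Epi e] (w : e ≫ g = h ≫ f') : g ≫ cokernel.π f' = 0 := by
  rw [← cancel_epi e, ← Category.assoc, w, Category.assoc, cokernel.condition, comp_zero,
    comp_zero]

section ImageIsoOfFac

attribute [local instance] strongEpi_of_epi

variable {P Q X : C} {f : P ⟶ Q} (e : P ⟶ X) (m : X ⟶ Q) [Epi e] [Mono m] (fac : e ≫ m = f)

noncomputable def imageIsoOfFac : Abelian.image f ≅ X :=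
  imageIsoImage f ≪≫ (image.isoStrongEpiMono e m fac).symm

theorem imageIsoOfFac_hom_comp : (imageIsoOfFac e m fac).hom ≫ m = Abelian.image.ι f := by
  rw [imageIsoOfFac, Iso.trans_hom, Iso.symm_hom, Category.assoc,
    image.isoStrongEpiMono_inv_comp_mono, imageIsoImage_hom_comp_image_ι]

theorem factorThruImage_imageIsoOfFac_hom :
    Abelian.factorThruImage f ≫ (imageIsoOfFac e m fac).hom = e := by
  rw [← cancel_mono m, Category.assoc, imageIsoOfFac_hom_comp, Abelian.image.fac, fac]

end ImageIsoOfFac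

end CategoryTheory.Abelian

section Presentations

variable {D : Type*} [Category D] {V : Type*} [Category V] (I : D ⥤ V)

structure ImagePresentation (M : V) where
  P : D
  Q : D
  f : P ⟶ Q
  p : I.obj P ⟶ M
  m : M ⟶ I.obj Q
  epi_p : Epi p
  mono_m : Mono m
  fac : p ≫ m = I.map f

attribute [instance] ImagePresentation.epi_p ImagePresentation.mono_m

variable {I}

theorem ImagePresentation.preimage_p_comp_preimage_m [I.Full] [I.Faithful] {X : D}
    (π : ImagePresentation I (I.obj X)) : I.preimage π.p ≫ I.preimage π.m = π.f :=
  I.map_injective (by rw [I.map_comp, I.map_preimage, I.map_preimage, π.fac])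

theorem ImagePresentation.epi_map_preimage_p [I.Full] {A : Type*} [Category A] (F : D ⥤ A)
    (hFepi : ∀ ⦃X Y : D⦄ (f : X ⟶ Y), Epi (I.map f) → Epi (F.map f)) {X : D}
    (π : ImagePresentation I (I.obj X)) : Epi (F.map (I.preimage π.p)) :=
  hFepi _ (by rw [I.map_preimage]; infer_instance)

theorem ImagePresentation.mono_map_preimage_m [I.Full] {A : Type*} [Category A] (F : D ⥤ A)
    (hFmono : ∀ ⦃X Y : D⦄ (f : X ⟶ Y), Mono (I.map f) → Mono (F.map f)) {X : D}
    (π : ImagePresentation I (I.obj X)) : Mono (F.map (I.preimage π.m)) :=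
  hFmono _ (by rw [I.map_preimage]; infer_instance)

variable [Abelian V]

noncomputable def ImagePresentation.ofImageIso {M : V} {P Q : D} (f : P ⟶ Q)
    (e : image (I.map f) ≅ M) : ImagePresentation I M where
  P := P
  Q := Q
  f := f
  p := factorThruImage (I.map f) ≫ e.hom
  m := e.inv ≫ image.ι (I.map f)
  epi_p := epi_comp _ _
  mono_m := mono_comp _ _
  fac := by simp

variable [I.Full]

theorem exists_map_comp_eq_map_comp_of_epi
    (hquot : ∀ M : V, ∃ (P : D) (q : I.obj P ⟶ M), Epi q)
    {N : V} {P₀ P₁ : D} (g : I.obj P₀ ⟶ N) (e : I.obj P₁ ⟶ N) [Epi e] :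
    ∃ (Z : D) (ζ : Z ⟶ P₀) (θ : Z ⟶ P₁),
      Epi (I.map ζ) ∧ (Epi g → Epi (I.map θ)) ∧ I.map ζ ≫ g = I.map θ ≫ e := by
  obtain ⟨Z, q, hq⟩ := hquot (pullback g e)
  refine ⟨Z, I.preimage (q ≫ pullback.fst g e), I.preimage (q ≫ pullback.snd g e), ?_,
    fun _ => ?_, ?_⟩
  · rw [I.map_preimage]
    exact epi_comp _ _
  · rw [I.map_preimage]
    exact epi_comp _ _
  · simp only [I.map_preimage, Category.assoc, pullback.condition]

theorem exists_comp_map_eq_comp_map_of_mono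
    (hsub : ∀ M : V, ∃ (Q : D) (j : M ⟶ I.obj Q), Mono j)
    {M : V} {Q₀ Q₁ : D} (g : M ⟶ I.obj Q₀) (n : M ⟶ I.obj Q₁) [Mono n] :
    ∃ (Z : D) (χ : Q₀ ⟶ Z) (χ' : Q₁ ⟶ Z),
      Mono (I.map χ) ∧ (Mono g → Mono (I.map χ')) ∧ g ≫ I.map χ = n ≫ I.map χ' := by
  obtain ⟨Z, j, hj⟩ := hsub (pushout n g)
  refine ⟨Z, I.preimage (pushout.inr n g ≫ j), I.preimage (pushout.inl n g ≫ j), ?_,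
    fun _ => ?_, ?_⟩
  · rw [I.map_preimage]
    exact mono_comp _ _
  · rw [I.map_preimage]
    exact mono_comp _ _
  · simp only [I.map_preimage, pushout.condition_assoc]

end Presentations

section PreexactLift

variable {D : Type*} [Category D] {V : Type*} [Category V]
  {I : D ⥤ V} [I.Full] (c : ∀ M : V, ImagePresentation I M)

noncomputable def presentationLift {M N : V} (α : M ⟶ N) : (c M).P ⟶ (c N).Q :=
  I.preimage ((c M).p ≫ α ≫ (c N).m)

@[simp]
theorem map_presentationLift {M N : V} (α : M ⟶ N) :
    I.map (presentationLift c α) = (c M).p ≫ α ≫ (c N).m :=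
  I.map_preimage _

variable [I.Faithful]

theorem presentationLift_id (M : V) : presentationLift c (𝟙 M) = (c M).f :=
  I.map_injective (by rw [map_presentationLift, Category.id_comp, (c M).fac])

theorem presentationLift_map {X Y : D} (u : X ⟶ Y) :
    presentationLift c (I.map u) =
      I.preimage (c (I.obj X)).p ≫ u ≫ I.preimage (c (I.obj Y)).m :=
  I.map_injective (by simp)

variable {A : Type*} [Category A] [Abelian A] (F : D ⥤ A)
  (hFmono : ∀ ⦃X Y : D⦄ (f : X ⟶ Y), Mono (I.map f) → Mono (F.map f))
  (hFepi : ∀ ⦃X Y : D⦄ (f : X ⟶ Y), Epi (I.map f) → Epi (F.map f))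

noncomputable def preexactLiftObjIso (X : D) : Abelian.image (F.map (c (I.obj X)).f) ≅ F.obj X :=
  haveI := (c (I.obj X)).epi_map_preimage_p F hFepi
  haveI := (c (I.obj X)).mono_map_preimage_m F hFmono
  Abelian.imageIsoOfFac _ _ (by rw [← F.map_comp, (c (I.obj X)).preimage_p_comp_preimage_m])

theorem factorThruImage_preexactLiftObjIso_hom (X : D) :
    Abelian.factorThruImage _ ≫ (preexactLiftObjIso c F hFmono hFepi X).hom =
      F.map (I.preimage (c (I.obj X)).p) :=
  haveI := (c (I.obj X)).epi_map_preimage_p F hFepi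
  haveI := (c (I.obj X)).mono_map_preimage_m F hFmono
  Abelian.factorThruImage_imageIsoOfFac_hom ..

theorem preexactLiftObjIso_hom_comp (X : D) :
    (preexactLiftObjIso c F hFmono hFepi X).hom ≫ F.map (I.preimage (c (I.obj X)).m) =
      Abelian.image.ι _ :=
  haveI := (c (I.obj X)).epi_map_preimage_p F hFepi
  haveI := (c (I.obj X)).mono_map_preimage_m F hFmono
  Abelian.imageIsoOfFac_hom_comp ..

variable [Abelian V]

theorem presentationLift_add [Preadditive D] [I.Additive] {M N : V} (α α' : M ⟶ N) :
    presentationLift c (α + α') = presentationLift c α + presentationLift c α' :=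
  I.map_injective (by simp [Preadditive.add_comp, Preadditive.comp_add])

theorem exists_comp_presentationLift_eq {M N : V} (α : M ⟶ N) :
    ∃ (Z : D) (ζ : Z ⟶ (c M).P) (θ : Z ⟶ (c N).P), Epi (I.map ζ) ∧ (Epi α → Epi (I.map θ)) ∧
      ∀ {O : V} (β : N ⟶ O), ζ ≫ presentationLift c (α ≫ β) = θ ≫ presentationLift c β := by
  obtain ⟨Z, ζ, θ, hζ, hθ, w⟩ := exists_map_comp_eq_map_comp_of_epi
    (fun M => ⟨_, (c M).p, inferInstance⟩) ((c M).p ≫ α) (c N).p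
  refine ⟨Z, ζ, θ, hζ, fun _ => hθ (epi_comp _ _), fun β => I.map_injective ?_⟩
  simp only [Functor.map_comp, map_presentationLift, Category.assoc, reassoc_of% w]

theorem exists_presentationLift_comp_eq {N O : V} (β : N ⟶ O) :
    ∃ (Z : D) (χ : (c O).Q ⟶ Z) (χ' : (c N).Q ⟶ Z), Mono (I.map χ) ∧ (Mono β → Mono (I.map χ')) ∧
      ∀ {M : V} (α : M ⟶ N), presentationLift c (α ≫ β) ≫ χ = presentationLift c α ≫ χ' := by
  obtain ⟨Z, χ, χ', hχ, hχ', w⟩ := exists_comp_map_eq_comp_map_of_mono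
    (fun M => ⟨_, (c M).m, inferInstance⟩) (β ≫ (c O).m) (c N).m
  refine ⟨Z, χ, χ', hχ, fun _ => hχ' (mono_comp _ _), fun α => I.map_injective ?_⟩
  simp only [Functor.map_comp, map_presentationLift, Category.assoc, w]

include hFmono in
theorem kernel_ι_comp_map_presentationLift {M N : V} (α : M ⟶ N) :
    kernel.ι (F.map (c M).f) ≫ F.map (presentationLift c α) = 0 := by
  obtain ⟨Z, χ, χ', hχ, -, w⟩ := exists_presentationLift_comp_eq c α
  have := hFmono _ hχ
  have w₁ : presentationLift c α ≫ χ = (c M).f ≫ χ' := by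
    simpa [presentationLift_id] using w (𝟙 M)
  exact Abelian.kernel_ι_comp_eq_zero_of_comp_eq (χ := F.map χ) (χ' := F.map χ')
    (by rw [← F.map_comp, w₁, F.map_comp])

include hFepi in
theorem map_presentationLift_comp_cokernel_π {M N : V} (α : M ⟶ N) :
    F.map (presentationLift c α) ≫ cokernel.π (F.map (c N).f) = 0 := by
  obtain ⟨Z, ζ, θ, hζ, -, w⟩ := exists_comp_presentationLift_eq c α
  have := hFepi _ hζ
  have w₁ : ζ ≫ presentationLift c α = θ ≫ (c N).f := by
    simpa [presentationLift_id] using w (𝟙 N)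
  exact Abelian.comp_cokernel_π_eq_zero_of_comp_eq (e := F.map ζ) (h := F.map θ)
    (by rw [← F.map_comp, w₁, F.map_comp])

noncomputable def preexactLiftMap {M N : V} (α : M ⟶ N) :
    Abelian.image (F.map (c M).f) ⟶ Abelian.image (F.map (c N).f) :=
  Abelian.inducedImageMap _ _ (F.map (presentationLift c α))
    (kernel_ι_comp_map_presentationLift c F hFmono α)
    (map_presentationLift_comp_cokernel_π c F hFepi α)

@[simp]
theorem factorThruImage_preexactLiftMap_ι {M N : V} (α : M ⟶ N) :
    Abelian.factorThruImage _ ≫ preexactLiftMap c F hFmono hFepi α ≫ Abelian.image.ι _ =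
      F.map (presentationLift c α) :=
  Abelian.factorThruImage_inducedImageMap_ι

theorem factorThruImage_preexactLiftMap_comp_ι {M N O : V} (α : M ⟶ N) (β : N ⟶ O) :
    Abelian.factorThruImage _ ≫ (preexactLiftMap c F hFmono hFepi α ≫
      preexactLiftMap c F hFmono hFepi β) ≫ Abelian.image.ι _ =
        F.map (presentationLift c (α ≫ β)) := by
  obtain ⟨Z, ζ, θ, hζ, -, w⟩ := exists_comp_presentationLift_eq c α
  have := hFepi _ hζ
  have w₁ : ζ ≫ presentationLift c α = θ ≫ (c N).f := by
    simpa [presentationLift_id] using w (𝟙 N)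
  have hα : F.map ζ ≫ Abelian.factorThruImage _ ≫ preexactLiftMap c F hFmono hFepi α =
      F.map θ ≫ Abelian.factorThruImage _ :=
    Abelian.comp_factorThruImage_inducedImageMap (by rw [← F.map_comp, w₁, F.map_comp])
  rw [← cancel_epi (F.map ζ)]
  calc _ = (F.map ζ ≫ Abelian.factorThruImage _ ≫ preexactLiftMap c F hFmono hFepi α) ≫
        preexactLiftMap c F hFmono hFepi β ≫ Abelian.image.ι _ := by simp only [Category.assoc]
    _ = F.map θ ≫ F.map (presentationLift c β) := by
      rw [hα, Category.assoc, factorThruImage_preexactLiftMap_ι]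
    _ = _ := by rw [← F.map_comp, ← F.map_comp, w]

noncomputable def preexactLift : V ⥤ A where
  obj M := Abelian.image (F.map (c M).f)
  map α := preexactLiftMap c F hFmono hFepi α
  map_id M := (Abelian.eq_inducedImageMap (by
    rw [Category.id_comp, Abelian.image.fac, presentationLift_id])).symm
  map_comp α β :=
    (Abelian.eq_inducedImageMap (factorThruImage_preexactLiftMap_comp_ι c F hFmono hFepi α β)).symm

theorem preexactLiftMap_add [Preadditive D] [I.Additive] [F.Additive] {M N : V}
    (α α' : M ⟶ N) :
    preexactLiftMap c F hFmono hFepi (α + α') =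
      preexactLiftMap c F hFmono hFepi α + preexactLiftMap c F hFmono hFepi α' :=
  (Abelian.eq_inducedImageMap (by
    rw [Preadditive.add_comp, Preadditive.comp_add, factorThruImage_preexactLiftMap_ι,
      factorThruImage_preexactLiftMap_ι, presentationLift_add, F.map_add])).symm

theorem mono_preexactLiftMap {M N : V} (α : M ⟶ N) [Mono α] :
    Mono (preexactLiftMap c F hFmono hFepi α) := by
  obtain ⟨Z, χ, χ', -, hχ', w⟩ := exists_presentationLift_comp_eq c α
  have := hFmono _ (hχ' inferInstance)
  have w₁ : presentationLift c α ≫ χ = (c M).f ≫ χ' := by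
    simpa [presentationLift_id] using w (𝟙 M)
  exact Abelian.mono_inducedImageMap (χ := F.map χ) (by rw [← F.map_comp, w₁, F.map_comp])

theorem epi_preexactLiftMap {M N : V} (α : M ⟶ N) [Epi α] :
    Epi (preexactLiftMap c F hFmono hFepi α) := by
  obtain ⟨Z, ζ, θ, -, hθ, w⟩ := exists_comp_presentationLift_eq c α
  have := hFepi _ (hθ inferInstance)
  have w₁ : ζ ≫ presentationLift c α = θ ≫ (c N).f := by
    simpa [presentationLift_id] using w (𝟙 N)
  exact Abelian.epi_inducedImageMap (e := F.map ζ) (by rw [← F.map_comp, w₁, F.map_comp])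

theorem preexactLiftMap_map_comp_preexactLiftObjIso_hom {X Y : D} (u : X ⟶ Y) :
    preexactLiftMap c F hFmono hFepi (I.map u) ≫ (preexactLiftObjIso c F hFmono hFepi Y).hom =
      (preexactLiftObjIso c F hFmono hFepi X).hom ≫ F.map u := by
  have := (c (I.obj Y)).mono_map_preimage_m F hFmono
  rw [← cancel_mono (F.map (I.preimage (c (I.obj Y)).m)),
    ← cancel_epi (Abelian.factorThruImage _)]
  simp only [Category.assoc, preexactLiftObjIso_hom_comp, factorThruImage_preexactLiftMap_ι]
  rw [← Category.assoc, factorThruImage_preexactLiftObjIso_hom, presentationLift_map,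
    F.map_comp, F.map_comp]

noncomputable def preexactLiftCompIso : I ⋙ preexactLift c F hFmono hFepi ≅ F :=
  NatIso.ofComponents (preexactLiftObjIso c F hFmono hFepi)
    (preexactLiftMap_map_comp_preexactLiftObjIso_hom c F hFmono hFepi)

end PreexactLift

theorem deligne_preexact_universality_existence_general
    {D : Type u₁} [Category.{v₁} D] [Preadditive D]
    {V : Type u₂} [Category.{v₂} V] [Abelian V]
    (I : D ⥤ V) [I.Additive] [I.Full] [I.Faithful]
    (h2 : ∀ M : V, ∃ (P Q : D) (f : P ⟶ Q), Nonempty (image (I.map f) ≅ M))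
    {A : Type u₃} [Category.{v₃} A] [Abelian A]
    (F : D ⥤ A) [F.Additive]
    (hFmono : ∀ ⦃X Y : D⦄ (f : X ⟶ Y), Mono (I.map f) → Mono (F.map f))
    (hFepi : ∀ ⦃X Y : D⦄ (f : X ⟶ Y), Epi (I.map f) → Epi (F.map f)) :
    ∃ U : V ⥤ A, U.Additive ∧
      (∀ ⦃X Y : V⦄ (g : X ⟶ Y), Mono g → Mono (U.map g)) ∧
      (∀ ⦃X Y : V⦄ (g : X ⟶ Y), Epi g → Epi (U.map g)) ∧
      Nonempty (I ⋙ U ≅ F) := by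
  choose P Q f e using h2
  let c (M : V) : ImagePresentation I M := .ofImageIso (f M) (e M).some
  exact ⟨preexactLift c F hFmono hFepi, ⟨preexactLiftMap_add c F hFmono hFepi _ _⟩,
    fun _ _ g _ => mono_preexactLiftMap c F hFmono hFepi g,
    fun _ _ g _ => epi_preexactLiftMap c F hFmono hFepi g,
    ⟨preexactLiftCompIso c F hFmono hFepi⟩⟩

theorem deligne_preexact_universality_existence
    {D : Type u₁} [Category.{v₁} D] [Preadditive D] [CategoryTheory.Linear ℂ D]
    [HasFiniteBiproducts D] [MonoidalCategory D] [SymmetricCategory D]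
    [MonoidalPreadditive D] [MonoidalLinear ℂ D] [RigidCategory D]
    {V : Type u₂} [Category.{v₂} V] [Abelian V] [CategoryTheory.Linear ℂ V]
    [MonoidalCategory V] [SymmetricCategory V] [MonoidalPreadditive V]
    [MonoidalLinear ℂ V] [RigidCategory V]
    (hV : Function.Bijective fun c : ℂ => c • (𝟙 (𝟙_ V)))
    (I : D ⥤ V) [I.Braided] [I.Additive] [I.Linear ℂ] [I.Full] [I.Faithful]
    (h2 : ∀ M : V, ∃ (P Q : D) (f : P ⟶ Q), Nonempty (image (I.map f) ≅ M))
    (h3e : ∀ ⦃X Y : V⦄ (g : X ⟶ Y), Epi g →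
      ∃ T : D, ¬ IsZero T ∧ IsSplitEpi (g ▷ I.obj T))
    (h3m : ∀ ⦃X Y : V⦄ (g : X ⟶ Y), Mono g →
      ∃ T : D, ¬ IsZero T ∧ IsSplitMono (g ▷ I.obj T))
    {A : Type u₃} [Category.{v₃} A] [Abelian A] [CategoryTheory.Linear ℂ A]
    (F : D ⥤ A) [F.Additive] [F.Linear ℂ]
    (hFmono : ∀ ⦃X Y : D⦄ (f : X ⟶ Y), Mono (I.map f) → Mono (F.map f))
    (hFepi : ∀ ⦃X Y : D⦄ (f : X ⟶ Y), Epi (I.map f) → Epi (F.map f)) :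
    ∃ U : V ⥤ A, U.Additive ∧
      (∀ ⦃X Y : V⦄ (g : X ⟶ Y), Mono g → Mono (U.map g)) ∧
      (∀ ⦃X Y : V⦄ (g : X ⟶ Y), Epi g → Epi (U.map g)) ∧
      Nonempty (I ⋙ U ≅ F) :=
  deligne_preexact_universality_existence_general I h2 F hFmono hFepi
end

section
/- Let 𝒟 be an additive ℂ-linear rigid symmetric monoidal category, 𝒱 a tensor category, and I : 𝒟 → 𝒱 a ℂ-linear symmetric monoidal functor satisfying assumptions (1)–(3). Let F : 𝒟 → 𝒜 be a faithful symmetric monoidal functor into a tensor category 𝒜, and let (U, θ) and (U′, θ′) be pairs consisting of an exact symmetric monoidal functor 𝒱 → 𝒜 and a monoidal natural isomorphism to F of the composite with I. Then every natural isomorphism φ : U ≅ U′ of the underlying functors satisfying θ′_X ∘ φ_{I(X)} = θ_X for all objects X of 𝒟 is automatically a monoidal natural transformation. (Full faithfulness part of the comparison between symmetric monoidal lifts and pre-exact lifts.) -/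
/-!
On objects `I P`, the hypothesis on `φ` says that `φ` restricted along `I` is `θ'⁻¹ ∘ θ`, a
composite of monoidal transformations; since `I` is strong monoidal this gives the unit axiom
and the tensor axiom at every pair `(I P, I Q)`. Every object of `V` is a quotient of some `I P`
(the image of `I f` is a quotient of its source), the right exact functor `U` preserves
epimorphisms, and in the rigid category `A` a tensor product of epimorphisms is an
epimorphism. The tensor axiom is a commutative square out of `U (I P) ⊗ U (I Q)`, so it
descends along `U p ⊗ U q` to any pair `(X, Y)`.
-/

open CategoryTheory CategoryTheory.Limits CategoryTheory.MonoidalCategory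

universe v₁ v₂ v₃ u₁ u₂ u₃

namespace CategoryTheory

open Functor.LaxMonoidal

section Rigid

variable {C : Type*} [Category* C] [MonoidalCategory C]

instance epi_whiskerRight_of_hasRightDual {X Y : C} (f : X ⟶ Y) [Epi f] (T : C)
    [HasRightDual T] : Epi (f ▷ T) :=
  have := (tensorRightAdjunction T Tᘁ).isLeftAdjoint
  (tensorRight T).map_epi f

instance epi_whiskerLeft_of_hasLeftDual {X Y : C} (f : X ⟶ Y) [Epi f] (T : C)
    [HasLeftDual T] : Epi (T ◁ f) :=
  have := (tensorLeftAdjunction (ᘁT) T).isLeftAdjoint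
  (tensorLeft T).map_epi f

instance epi_tensorHom_of_rigid [RigidCategory C] {X Y X' Y' : C} (f : X ⟶ Y) (g : X' ⟶ Y')
    [Epi f] [Epi g] : Epi (f ⊗ₘ g) := by
  rw [MonoidalCategory.tensorHom_def]
  infer_instance

end Rigid

namespace NatTrans

variable {C D E : Type*} [Category* C] [Category* D] [Category* E]
  [MonoidalCategory C] [MonoidalCategory D] [MonoidalCategory E]
  {U U' : D ⥤ E} [U.LaxMonoidal] [U'.LaxMonoidal] (φ : U ⟶ U')

theorem μ_comp_app_of_epi {X Y X' Y' : D} (p : X' ⟶ X) (q : Y' ⟶ Y)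
    [Epi (U.map p ⊗ₘ U.map q)]
    (h : μ U X' Y' ≫ φ.app (X' ⊗ Y') = (φ.app X' ⊗ₘ φ.app Y') ≫ μ U' X' Y') :
    μ U X Y ≫ φ.app (X ⊗ Y) = (φ.app X ⊗ₘ φ.app Y) ≫ μ U' X Y := by
  rw [← cancel_epi (U.map p ⊗ₘ U.map q)]
  calc (U.map p ⊗ₘ U.map q) ≫ μ U X Y ≫ φ.app (X ⊗ Y)
      = (μ U X' Y' ≫ φ.app (X' ⊗ Y')) ≫ U'.map (p ⊗ₘ q) := by
        rw [μ_natural_assoc, φ.naturality, Category.assoc]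
    _ = (φ.app X' ≫ U'.map p ⊗ₘ φ.app Y' ≫ U'.map q) ≫ μ U' X Y := by
        rw [h, Category.assoc, ← μ_natural, tensorHom_comp_tensorHom_assoc]
    _ = (U.map p ⊗ₘ U.map q) ≫ (φ.app X ⊗ₘ φ.app Y) ≫ μ U' X Y := by
        rw [← φ.naturality, ← φ.naturality, tensorHom_comp_tensorHom_assoc]

variable (I : C ⥤ D) [I.Monoidal] [IsMonoidal (Functor.whiskerLeft I φ)]
include I

theorem ε_comp_app_of_isMonoidal_whiskerLeft : ε U ≫ φ.app (𝟙_ D) = ε U' := by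
  rw [← cancel_mono (U'.map (ε I)), Category.assoc, ← φ.naturality]
  simpa [comp_ε] using IsMonoidal.unit (τ := Functor.whiskerLeft I φ)

theorem μ_comp_app_obj_of_isMonoidal_whiskerLeft (P Q : C) :
    μ U (I.obj P) (I.obj Q) ≫ φ.app (I.obj P ⊗ I.obj Q) =
      (φ.app (I.obj P) ⊗ₘ φ.app (I.obj Q)) ≫ μ U' (I.obj P) (I.obj Q) := by
  rw [← cancel_mono (U'.map (μ I P Q)), Category.assoc, ← φ.naturality]
  simpa [comp_μ] using IsMonoidal.tensor (τ := Functor.whiskerLeft I φ) P Q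

theorem IsMonoidal.of_whiskerLeft_s5 [RigidCategory E] [U.PreservesEpimorphisms]
    (hI : ∀ X : D, ∃ (P : C) (p : I.obj P ⟶ X), Epi p) : IsMonoidal φ where
  unit := ε_comp_app_of_isMonoidal_whiskerLeft φ I
  tensor X Y := by
    obtain ⟨P, p, hp⟩ := hI X
    obtain ⟨Q, q, hq⟩ := hI Y
    exact μ_comp_app_of_epi φ p q (μ_comp_app_obj_of_isMonoidal_whiskerLeft φ I P Q)

end NatTrans

end CategoryTheory

theorem deligne_comparison_full_faithfulness_general
    {D : Type u₁} [Category.{v₁} D] [MonoidalCategory D] [SymmetricCategory D]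
    {V : Type u₂} [Category.{v₂} V] [Abelian V]
    [MonoidalCategory V] [SymmetricCategory V]
    (I : D ⥤ V) [I.Braided]
    (h2 : ∀ M : V, ∃ (P Q : D) (f : P ⟶ Q), Nonempty (image (I.map f) ≅ M))
    {A : Type u₃} [Category.{v₃} A]
    [MonoidalCategory A] [SymmetricCategory A] [RigidCategory A]
    (F : D ⥤ A) [F.Braided]
    (U : V ⥤ A) [U.Braided] [PreservesFiniteColimits U]
    (U' : V ⥤ A) [U'.Braided]
    (θ : I ⋙ U ≅ F) [NatTrans.IsMonoidal θ.hom]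
    (θ' : I ⋙ U' ≅ F) [NatTrans.IsMonoidal θ'.hom]
    (φ : U ≅ U')
    (hφ : ∀ X : D, φ.hom.app (I.obj X) ≫ θ'.hom.app X = θ.hom.app X) :
    NatTrans.IsMonoidal φ.hom := by
  have hφI : Functor.whiskerLeft I φ.hom = θ.hom ≫ θ'.inv := by
    ext X
    simp [← hφ X]
  have : NatTrans.IsMonoidal (Functor.whiskerLeft I φ.hom) := hφI ▸ inferInstance
  refine NatTrans.IsMonoidal.of_whiskerLeft_s5 φ.hom I fun X => ?_
  obtain ⟨P, Q, f, ⟨e⟩⟩ := h2 X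
  exact ⟨P, factorThruImage (I.map f) ≫ e.hom, epi_comp _ _⟩

theorem deligne_comparison_full_faithfulness
    {D : Type u₁} [Category.{v₁} D] [Preadditive D] [CategoryTheory.Linear ℂ D]
    [HasFiniteBiproducts D] [MonoidalCategory D] [SymmetricCategory D]
    [MonoidalPreadditive D] [MonoidalLinear ℂ D] [RigidCategory D]
    {V : Type u₂} [Category.{v₂} V] [Abelian V] [CategoryTheory.Linear ℂ V]
    [MonoidalCategory V] [SymmetricCategory V] [MonoidalPreadditive V]
    [MonoidalLinear ℂ V] [RigidCategory V]
    (hV : Function.Bijective fun c : ℂ => c • (𝟙 (𝟙_ V)))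
    (I : D ⥤ V) [I.Braided] [I.Additive] [I.Linear ℂ] [I.Full] [I.Faithful]
    (h2 : ∀ M : V, ∃ (P Q : D) (f : P ⟶ Q), Nonempty (image (I.map f) ≅ M))
    (h3e : ∀ ⦃X Y : V⦄ (g : X ⟶ Y), Epi g →
      ∃ T : D, ¬ IsZero T ∧ IsSplitEpi (g ▷ I.obj T))
    (h3m : ∀ ⦃X Y : V⦄ (g : X ⟶ Y), Mono g →
      ∃ T : D, ¬ IsZero T ∧ IsSplitMono (g ▷ I.obj T))
    {A : Type u₃} [Category.{v₃} A] [Abelian A] [CategoryTheory.Linear ℂ A]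
    [MonoidalCategory A] [SymmetricCategory A] [MonoidalPreadditive A]
    [MonoidalLinear ℂ A] [RigidCategory A]
    (hA : Function.Bijective fun c : ℂ => c • (𝟙 (𝟙_ A)))
    (F : D ⥤ A) [F.Braided] [F.Faithful]
    (U : V ⥤ A) [U.Braided] [PreservesFiniteLimits U] [PreservesFiniteColimits U]
    (U' : V ⥤ A) [U'.Braided] [PreservesFiniteLimits U'] [PreservesFiniteColimits U']
    (θ : I ⋙ U ≅ F) [NatTrans.IsMonoidal θ.hom]
    (θ' : I ⋙ U' ≅ F) [NatTrans.IsMonoidal θ'.hom]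
    (φ : U ≅ U')
    (hφ : ∀ X : D, φ.hom.app (I.obj X) ≫ θ'.hom.app X = θ.hom.app X) :
    NatTrans.IsMonoidal φ.hom :=
  deligne_comparison_full_faithfulness_general I h2 F U U' θ θ' φ hφ
end

section
/- Let 𝒟 be an additive ℂ-linear rigid symmetric monoidal category, 𝒱 a tensor category, and I : 𝒟 → 𝒱 a ℂ-linear symmetric monoidal functor satisfying assumptions (1)–(3). Then every faithful symmetric monoidal functor F : 𝒟 → 𝒜 into a tensor category 𝒜 is pre-exact: if f is a morphism of 𝒟 such that I(f) is an epimorphism in 𝒱, then F(f) is an epimorphism in 𝒜, and if I(f) is a monomorphism in 𝒱, then F(f) is a monomorphism in 𝒜. -/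
/-!
In a rigid abelian braided category `C` in which `End (𝟙_ C)` is a domain of scalars, the unit is
simple. If `u : U ⟶ 𝟙_ C` is a mono with cokernel `Q`, then `U ⊗ Q = 0`, hence `Uᘁ ⊗ Q = 0`, so
`Uᘁ ◁ u` is an isomorphism and duality turns its inverse into a retraction `r` of `u`; the
idempotent scalar `r ≫ u` is then `0` (forcing `u = 0`) or `1` (making `u` invertible).
Consequently the coevaluation of a nonzero object is monic, and `- ⊗ Z` is faithful for `Z ≠ 0`.

If `I f` is an epimorphism, then `I f ▷ I T` splits for some nonzero `T`, and since `I` is fully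
faithful and monoidal, `f ▷ T` already splits in `D`. Hence `F f ▷ F T` splits, `F T ≠ 0` because
`F` is faithful, and faithfulness of `- ⊗ F T` shows that `F f` is an epimorphism. Monomorphisms
are handled in the same way.
-/

open CategoryTheory CategoryTheory.Limits CategoryTheory.MonoidalCategory

universe v₁ v₂ v₃ u₁ u₂ u₃

namespace CategoryTheory

section Whiskering

variable {C : Type u₁} [Category.{v₁} C] [MonoidalCategory C]

instance isLeftAdjoint_tensorLeft (X : C) [HasLeftDual X] : (tensorLeft X).IsLeftAdjoint :=
  (tensorLeftAdjunction (ᘁX) X).isLeftAdjoint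

instance isRightAdjoint_tensorLeft (X : C) [HasRightDual X] : (tensorLeft X).IsRightAdjoint :=
  (tensorLeftAdjunction X (Xᘁ)).isRightAdjoint

instance isLeftAdjoint_tensorRight (X : C) [HasRightDual X] : (tensorRight X).IsLeftAdjoint :=
  (tensorRightAdjunction X (Xᘁ)).isLeftAdjoint

instance isRightAdjoint_tensorRight (X : C) [HasLeftDual X] : (tensorRight X).IsRightAdjoint :=
  (tensorRightAdjunction (ᘁX) X).isRightAdjoint

variable [RigidCategory C]

instance epi_whiskerLeft (X : C) {Y Z : C} (f : Y ⟶ Z) [Epi f] : Epi (X ◁ f) :=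
  (tensorLeft X).map_epi f

instance mono_whiskerLeft (X : C) {Y Z : C} (f : Y ⟶ Z) [Mono f] : Mono (X ◁ f) :=
  (tensorLeft X).map_mono f

instance epi_whiskerRight {X Y : C} (f : X ⟶ Y) [Epi f] (Z : C) : Epi (f ▷ Z) :=
  (tensorRight Z).map_epi f

instance mono_whiskerRight {X Y : C} (f : X ⟶ Y) [Mono f] (Z : C) : Mono (f ▷ Z) :=
  (tensorRight Z).map_mono f

end Whiskering

theorem isSplitMono_of_isIso_whiskerLeft {C : Type u₁} [Category.{v₁} C] [MonoidalCategory C]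
    {U X : C} [HasRightDual U] (u : U ⟶ X) [IsIso (Uᘁ ◁ u)] : IsSplitMono u := by
  let e := tensorLeftHomEquiv U U (Uᘁ) (𝟙_ C)
  let e' := tensorLeftHomEquiv X U (Uᘁ) (𝟙_ C)
  refine IsSplitMono.mk' ⟨e' (inv (Uᘁ ◁ u) ≫ e.symm (ρ_ U).inv) ≫ (ρ_ U).hom, ?_⟩
  have : u ≫ e' (inv (Uᘁ ◁ u) ≫ e.symm (ρ_ U).inv) = (ρ_ U).inv := by
    apply e.symm.injective
    rw [tensorLeftHomEquiv_symm_naturality, Equiv.symm_apply_apply, IsIso.hom_inv_id_assoc]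
  rw [reassoc_of% this, Iso.inv_hom_id]

theorem IsZero.of_faithful_of_isZero {C : Type u₁} [Category.{v₁} C] [HasZeroMorphisms C]
    {D : Type u₂} [Category.{v₂} D] (F : C ⥤ D) [F.Faithful] {X : C} (hX : IsZero (F.obj X)) :
    IsZero X :=
  (IsZero.iff_id_eq_zero X).mpr (F.map_injective (hX.eq_of_src _ _))

section ZeroObjects

variable {C : Type u₁} [Category.{v₁} C] [Preadditive C] [MonoidalCategory C]

theorem isZero_tensor_cokernel [RigidCategory C] {U : C} (u : U ⟶ 𝟙_ C) [Mono u]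
    [HasCokernel u] : IsZero (U ⊗ cokernel u) := by
  have : U ◁ cokernel.π u ≫ u ▷ cokernel u = 0 := by
    simp [whisker_exchange, unitors_equal]
  exact IsZero.of_mono_eq_zero _ (zero_of_epi_comp _ this)

variable [MonoidalPreadditive C]

theorem isZero_tensor_of_exactPairing [BraidedCategory C] {X Y Z : C} [ExactPairing X Y]
    (h : IsZero (X ⊗ Z)) : IsZero (Y ⊗ Z) := by
  -- `Y ⊗ Z` is a retract of `(Y ⊗ (X ⊗ Y)) ⊗ Z ≅ Y ⊗ ((X ⊗ Z) ⊗ Y)` by a zigzag identity.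
  let i : Y ⟶ Y ⊗ (X ⊗ Y) := (ρ_ Y).inv ≫ Y ◁ η_ X Y
  have : IsSplitMono i :=
    IsSplitMono.mk' ⟨(α_ Y X Y).inv ≫ ε_ X Y ▷ Y ≫ (λ_ Y).hom, by simp [i]⟩
  have : Mono (i ▷ Z) := inferInstanceAs (Mono ((tensorRight Z).map i))
  refine IsZero.of_mono (i ▷ Z)
    (((tensorLeft Y).map_isZero ((tensorRight Y).map_isZero h)).of_iso ?_)
  exact α_ _ _ _ ≪≫ whiskerLeftIso Y (α_ _ _ _ ≪≫ whiskerLeftIso X (β_ Y Z) ≪≫ (α_ _ _ _).symm)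

theorem coevaluation_ne_zero {X Y : C} [ExactPairing X Y] (hX : ¬ IsZero X) : η_ X Y ≠ 0 := by
  intro h
  apply hX
  rw [IsZero.iff_id_eq_zero]
  have := ExactPairing.evaluation_coevaluation X Y
  simp only [h, MonoidalPreadditive.zero_whiskerRight, zero_comp] at this
  simpa using ((λ_ X).inv ≫= this =≫ (ρ_ X).hom).symm

end ZeroObjects

theorem eq_zero_or_eq_id_of_idempotent {C : Type u₁} [Category.{v₁} C] [Preadditive C]
    {𝕜 : Type*} [Ring 𝕜] [IsDomain 𝕜] [Linear 𝕜 C] {X : C}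
    (hX : Function.Bijective fun c : 𝕜 => c • 𝟙 X) {e : X ⟶ X} (he : e ≫ e = e) :
    e = 0 ∨ e = 𝟙 X := by
  obtain ⟨c, rfl⟩ := hX.2 e
  have hc : IsIdempotentElem c := hX.1 (by simpa [smul_smul] using he)
  rcases IsIdempotentElem.iff_eq_zero_or_one.mp hc with rfl | rfl
  · exact Or.inl (zero_smul _ _)
  · exact Or.inr (one_smul _ _)

section TensorCategory

variable {C : Type u₁} [Category.{v₁} C] [Abelian C] [MonoidalCategory C]
  [MonoidalPreadditive C] [RigidCategory C]

theorem isIso_whiskerLeft_of_isZero_tensor_cokernel {X Y : C} (f : X ⟶ Y) [Mono f] {Z : C}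
    (h : IsZero (Z ⊗ cokernel f)) : IsIso (Z ◁ f) := by
  have : Epi (Z ◁ f) :=
    (((ShortComplex.mk _ _ (cokernel.condition f)).exact_of_g_is_cokernel
      (cokernelIsCokernel f)).map (tensorLeft Z)).epi_f (h.eq_of_tgt _ _)
  exact isIso_of_mono_of_epi _

variable [BraidedCategory C] {𝕜 : Type*} [Ring 𝕜] [IsDomain 𝕜] [Linear 𝕜 C]

theorem simple_tensorUnit (hC : Function.Bijective fun c : 𝕜 => c • 𝟙 (𝟙_ C)) : Simple (𝟙_ C) where
  mono_isIso_iff_nonzero {U} u _ := by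
    constructor
    · intro _ hu
      have : (1 : 𝕜) • 𝟙 (𝟙_ C) = (0 : 𝕜) • 𝟙 (𝟙_ C) := by
        simp [← IsIso.inv_hom_id u, hu]
      exact one_ne_zero (hC.1 this)
    · intro hu
      have : IsIso (Uᘁ ◁ u) := isIso_whiskerLeft_of_isZero_tensor_cokernel u
        (isZero_tensor_of_exactPairing (isZero_tensor_cokernel u))
      have : IsSplitMono u := isSplitMono_of_isIso_whiskerLeft u
      rcases eq_zero_or_eq_id_of_idempotent hC (e := retraction u ≫ u) (by simp) with h | h
      · exact absurd (calc u = u ≫ retraction u ≫ u := by simp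
          _ = 0 := by rw [h, comp_zero]) hu
      · exact ⟨retraction u, IsSplitMono.id u, h⟩

theorem mono_coevaluation (hC : Function.Bijective fun c : 𝕜 => c • 𝟙 (𝟙_ C)) {X Y : C}
    [ExactPairing X Y] (hX : ¬ IsZero X) : Mono (η_ X Y) :=
  have := simple_tensorUnit hC
  mono_of_nonzero_from_simple (coevaluation_ne_zero hX)

theorem faithful_tensorRight (hC : Function.Bijective fun c : 𝕜 => c • 𝟙 (𝟙_ C)) {Z : C}
    (hZ : ¬ IsZero Z) : (tensorRight Z).Faithful := by
  suffices h : ∀ {X Y : C} (g : X ⟶ Y), g ▷ Z = 0 → g = 0 from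
    ⟨fun hf => sub_eq_zero.mp (h _ ((tensorRight Z).map_sub.trans (sub_eq_zero.mpr hf)))⟩
  intro X Y g hg
  have : Mono (Y ◁ η_ Z (Zᘁ)) := by have := mono_coevaluation hC (Y := Zᘁ) hZ; infer_instance
  have : (g ≫ (ρ_ Y).inv) ≫ Y ◁ η_ Z (Zᘁ) = 0 := by
    rw [Category.assoc, rightUnitor_inv_naturality_assoc, ← whisker_exchange]
    simp [hg]
  simpa using zero_of_comp_mono _ this

end TensorCategory

section MonoidalFunctor

variable {C : Type u₁} [Category.{v₁} C] [MonoidalCategory C]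
  {D : Type u₂} [Category.{v₂} D] [MonoidalCategory D]

open Functor.LaxMonoidal Functor.OplaxMonoidal

theorem Functor.Monoidal.map_whiskerRight' (G : C ⥤ D) [G.Monoidal] {X Y : C} (f : X ⟶ Y)
    (T : C) : G.map f ▷ G.obj T = μ G X T ≫ G.map (f ▷ T) ≫ δ G Y T := by
  rw [← μ_natural_left_assoc, Functor.Monoidal.μ_δ, Category.comp_id]

theorem Functor.Monoidal.isSplitEpi_map_whiskerRight_iff (G : C ⥤ D) [G.Monoidal] {X Y : C}
    (f : X ⟶ Y) (T : C) : IsSplitEpi (G.map (f ▷ T)) ↔ IsSplitEpi (G.map f ▷ G.obj T) := by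
  constructor <;> intro
  · rw [map_whiskerRight']; infer_instance
  · rw [map_whiskerRight]; infer_instance

theorem Functor.Monoidal.isSplitMono_map_whiskerRight_iff (G : C ⥤ D) [G.Monoidal] {X Y : C}
    (f : X ⟶ Y) (T : C) : IsSplitMono (G.map (f ▷ T)) ↔ IsSplitMono (G.map f ▷ G.obj T) := by
  constructor <;> intro
  · rw [map_whiskerRight']; infer_instance
  · rw [map_whiskerRight]; infer_instance

end MonoidalFunctor

section PreExact

variable {C : Type u₁} [Category.{v₁} C] [HasZeroMorphisms C] [MonoidalCategory C]
  {A : Type u₂} [Category.{v₂} A] [Abelian A] [MonoidalCategory A] [MonoidalPreadditive A]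
  [BraidedCategory A] [RigidCategory A] {𝕜 : Type*} [Ring 𝕜] [IsDomain 𝕜] [Linear 𝕜 A]

theorem epi_map_of_isSplitEpi_whiskerRight
    (hA : Function.Bijective fun c : 𝕜 => c • 𝟙 (𝟙_ A)) (F : C ⥤ A) [F.Monoidal] [F.Faithful]
    {T : C} (hT : ¬ IsZero T) {X Y : C} (f : X ⟶ Y) [IsSplitEpi (f ▷ T)] : Epi (F.map f) := by
  have := faithful_tensorRight hA (mt (IsZero.of_faithful_of_isZero F) hT)
  have := (Functor.Monoidal.isSplitEpi_map_whiskerRight_iff F f T).mp inferInstance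
  exact (tensorRight (F.obj T)).epi_of_epi_map (inferInstanceAs (Epi (F.map f ▷ F.obj T)))

theorem mono_map_of_isSplitMono_whiskerRight
    (hA : Function.Bijective fun c : 𝕜 => c • 𝟙 (𝟙_ A)) (F : C ⥤ A) [F.Monoidal] [F.Faithful]
    {T : C} (hT : ¬ IsZero T) {X Y : C} (f : X ⟶ Y) [IsSplitMono (f ▷ T)] : Mono (F.map f) := by
  have := faithful_tensorRight hA (mt (IsZero.of_faithful_of_isZero F) hT)
  have := (Functor.Monoidal.isSplitMono_map_whiskerRight_iff F f T).mp inferInstance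
  exact (tensorRight (F.obj T)).mono_of_mono_map (inferInstanceAs (Mono (F.map f ▷ F.obj T)))

end PreExact

end CategoryTheory

theorem deligne_faithful_SM_functor_preexact_general
    {D : Type u₁} [Category.{v₁} D] [Preadditive D]
    [MonoidalCategory D] [SymmetricCategory D]
    {V : Type u₂} [Category.{v₂} V]
    [MonoidalCategory V] [SymmetricCategory V]
    (I : D ⥤ V) [I.Braided] [I.Full] [I.Faithful]
    (h3e : ∀ ⦃X Y : V⦄ (g : X ⟶ Y), Epi g →
      ∃ T : D, ¬ IsZero T ∧ IsSplitEpi (g ▷ I.obj T))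
    (h3m : ∀ ⦃X Y : V⦄ (g : X ⟶ Y), Mono g →
      ∃ T : D, ¬ IsZero T ∧ IsSplitMono (g ▷ I.obj T))
    {A : Type u₃} [Category.{v₃} A] [Abelian A] [CategoryTheory.Linear ℂ A]
    [MonoidalCategory A] [SymmetricCategory A] [MonoidalPreadditive A]
    [RigidCategory A]
    (hA : Function.Bijective fun c : ℂ => c • (𝟙 (𝟙_ A)))
    (F : D ⥤ A) [F.Braided] [F.Faithful] :
    ∀ ⦃X Y : D⦄ (f : X ⟶ Y),
      (Epi (I.map f) → Epi (F.map f)) ∧ (Mono (I.map f) → Mono (F.map f)) := by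
  intro X Y f
  refine ⟨fun hf => ?_, fun hf => ?_⟩
  · obtain ⟨T, hT, hsplit⟩ := h3e _ hf
    have : IsSplitEpi (f ▷ T) := (I.isSplitEpi_iff _).mp
      ((Functor.Monoidal.isSplitEpi_map_whiskerRight_iff I f T).mpr hsplit)
    exact epi_map_of_isSplitEpi_whiskerRight hA F hT f
  · obtain ⟨T, hT, hsplit⟩ := h3m _ hf
    have : IsSplitMono (f ▷ T) := (I.isSplitMono_iff _).mp
      ((Functor.Monoidal.isSplitMono_map_whiskerRight_iff I f T).mpr hsplit)
    exact mono_map_of_isSplitMono_whiskerRight hA F hT f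

theorem deligne_faithful_SM_functor_preexact
    {D : Type u₁} [Category.{v₁} D] [Preadditive D] [CategoryTheory.Linear ℂ D]
    [HasFiniteBiproducts D] [MonoidalCategory D] [SymmetricCategory D]
    [MonoidalPreadditive D] [MonoidalLinear ℂ D] [RigidCategory D]
    {V : Type u₂} [Category.{v₂} V] [Abelian V] [CategoryTheory.Linear ℂ V]
    [MonoidalCategory V] [SymmetricCategory V] [MonoidalPreadditive V]
    [MonoidalLinear ℂ V] [RigidCategory V]
    (hV : Function.Bijective fun c : ℂ => c • (𝟙 (𝟙_ V)))
    (I : D ⥤ V) [I.Braided] [I.Additive] [I.Linear ℂ] [I.Full] [I.Faithful]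
    (h2 : ∀ M : V, ∃ (P Q : D) (f : P ⟶ Q), Nonempty (image (I.map f) ≅ M))
    (h3e : ∀ ⦃X Y : V⦄ (g : X ⟶ Y), Epi g →
      ∃ T : D, ¬ IsZero T ∧ IsSplitEpi (g ▷ I.obj T))
    (h3m : ∀ ⦃X Y : V⦄ (g : X ⟶ Y), Mono g →
      ∃ T : D, ¬ IsZero T ∧ IsSplitMono (g ▷ I.obj T))
    {A : Type u₃} [Category.{v₃} A] [Abelian A] [CategoryTheory.Linear ℂ A]
    [MonoidalCategory A] [SymmetricCategory A] [MonoidalPreadditive A]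
    [MonoidalLinear ℂ A] [RigidCategory A]
    (hA : Function.Bijective fun c : ℂ => c • (𝟙 (𝟙_ A)))
    (F : D ⥤ A) [F.Braided] [F.Faithful] :
    ∀ ⦃X Y : D⦄ (f : X ⟶ Y),
      (Epi (I.map f) → Epi (F.map f)) ∧ (Mono (I.map f) → Mono (F.map f)) :=
  deligne_faithful_SM_functor_preexact_general I h3e h3m hA F
end

section
/- Let 𝒟 be an additive ℂ-linear rigid symmetric monoidal category, 𝒱 a tensor category, and I : 𝒟 → 𝒱 a ℂ-linear symmetric monoidal functor satisfying assumptions (1)–(3). Let f : M → N be a morphism in 𝒱, let α : I(X) → M and α′ : I(X′) → N be epimorphisms, and let β : M → I(Y) and β′ : N → I(Y′) be monomorphisms, with X, X′, Y, Y′ objects of 𝒟. Then there exist objects R, S of 𝒟 and morphisms p : I(R) → I(X), p′ : I(R) → I(X′), q : I(Y) → I(S), q′ : I(Y′) → I(S) such that p is an epimorphism, q′ is a monomorphism, f ∘ α ∘ p = α′ ∘ p′, and q ∘ β = q′ ∘ β′ ∘ f. (Nonemptiness of the category of presentations of the morphism f.) -/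
/-!
Every object of `𝒱`, being an image `image (I g)`, is a quotient of some `I R` and a
subobject of some `I S`. Covering the pullback of `α ≫ f` along `α'` by an epimorphism
from `I R` gives `p` and `p'`, and `p` is epic because in an abelian category the pullback of
the epimorphism `α'` is an epimorphism.
Dually, embedding the pushout of `β` and `f ≫ β'` into `I S` gives `q` and `q'`.
-/

open CategoryTheory CategoryTheory.Limits CategoryTheory.MonoidalCategory

universe v₁ v₂ v₃ u₁ u₂ u₃

namespace CategoryTheory.Functor

variable {D : Type u₁} [Category.{v₁} D] {V : Type u₂} [Category.{v₂} V] (I : D ⥤ V)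

theorem exists_epi_from_obj_of_iso_image [HasImages V] [HasEqualizers V]
    (hI : ∀ M : V, ∃ (P Q : D) (g : P ⟶ Q), Nonempty (image (I.map g) ≅ M)) (M : V) :
    ∃ (R : D) (π : I.obj R ⟶ M), Epi π := by
  obtain ⟨P, _, g, ⟨e⟩⟩ := hI M
  exact ⟨P, factorThruImage (I.map g) ≫ e.hom, epi_comp _ _⟩

theorem exists_mono_to_obj_of_iso_image [HasImages V]
    (hI : ∀ M : V, ∃ (P Q : D) (g : P ⟶ Q), Nonempty (image (I.map g) ≅ M)) (M : V) :
    ∃ (S : D) (ι : M ⟶ I.obj S), Mono ι := by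
  obtain ⟨_, Q, g, ⟨e⟩⟩ := hI M
  exact ⟨Q, e.inv ≫ image.ι (I.map g), mono_comp _ _⟩

variable [Abelian V]

theorem exists_epi_commSq_of_epi
    (hI : ∀ M : V, ∃ (R : D) (π : I.obj R ⟶ M), Epi π)
    {A B Z : V} (u : A ⟶ Z) (v : B ⟶ Z) [Epi v] :
    ∃ (R : D) (p : I.obj R ⟶ A) (p' : I.obj R ⟶ B), Epi p ∧ p ≫ u = p' ≫ v := by
  obtain ⟨R, π, _⟩ := hI (pullback u v)
  refine ⟨R, π ≫ pullback.fst u v, π ≫ pullback.snd u v, epi_comp _ _, ?_⟩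
  simp only [Category.assoc, pullback.condition]

theorem exists_mono_commSq_of_mono
    (hI : ∀ M : V, ∃ (S : D) (ι : M ⟶ I.obj S), Mono ι)
    {A B Z : V} (u : Z ⟶ A) (v : Z ⟶ B) [Mono u] :
    ∃ (S : D) (q : A ⟶ I.obj S) (q' : B ⟶ I.obj S), Mono q' ∧ u ≫ q = v ≫ q' := by
  obtain ⟨S, ι, _⟩ := hI (pushout u v)
  refine ⟨S, pushout.inl u v ≫ ι, pushout.inr u v ≫ ι, mono_comp _ _, ?_⟩
  simp only [← Category.assoc, pushout.condition]

end CategoryTheory.Functor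

theorem deligne_presentations_nonempty_general
    {D : Type u₁} [Category.{v₁} D]
    {V : Type u₂} [Category.{v₂} V] [Abelian V]
    (I : D ⥤ V)
    (h2 : ∀ M : V, ∃ (P Q : D) (f : P ⟶ Q), Nonempty (image (I.map f) ≅ M))
    {M N : V} (f : M ⟶ N) {X X' Y Y' : D}
    (α : I.obj X ⟶ M) (α' : I.obj X' ⟶ N) (hα' : Epi α')
    (β : M ⟶ I.obj Y) (hβ : Mono β) (β' : N ⟶ I.obj Y') :
    ∃ (R S : D) (p : I.obj R ⟶ I.obj X) (p' : I.obj R ⟶ I.obj X')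
      (q : I.obj Y ⟶ I.obj S) (q' : I.obj Y' ⟶ I.obj S),
      Epi p ∧ Mono q' ∧ p ≫ α ≫ f = p' ≫ α' ∧ β ≫ q = f ≫ β' ≫ q' := by
  obtain ⟨R, p, p', hp, hpp'⟩ :=
    I.exists_epi_commSq_of_epi (I.exists_epi_from_obj_of_iso_image h2) (α ≫ f) α'
  obtain ⟨S, q, q', hq', hqq'⟩ :=
    I.exists_mono_commSq_of_mono (I.exists_mono_to_obj_of_iso_image h2) β (f ≫ β')
  exact ⟨R, S, p, p', q, q', hp, hq', hpp', by rw [hqq', Category.assoc]⟩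

theorem deligne_presentations_nonempty
    {D : Type u₁} [Category.{v₁} D] [Preadditive D] [CategoryTheory.Linear ℂ D]
    [HasFiniteBiproducts D] [MonoidalCategory D] [SymmetricCategory D]
    [MonoidalPreadditive D] [MonoidalLinear ℂ D] [RigidCategory D]
    {V : Type u₂} [Category.{v₂} V] [Abelian V] [CategoryTheory.Linear ℂ V]
    [MonoidalCategory V] [SymmetricCategory V] [MonoidalPreadditive V]
    [MonoidalLinear ℂ V] [RigidCategory V]
    (hV : Function.Bijective fun c : ℂ => c • (𝟙 (𝟙_ V)))
    (I : D ⥤ V) [I.Braided] [I.Additive] [I.Linear ℂ] [I.Full] [I.Faithful]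
    (h2 : ∀ M : V, ∃ (P Q : D) (f : P ⟶ Q), Nonempty (image (I.map f) ≅ M))
    (h3e : ∀ ⦃X Y : V⦄ (g : X ⟶ Y), Epi g →
      ∃ T : D, ¬ IsZero T ∧ IsSplitEpi (g ▷ I.obj T))
    (h3m : ∀ ⦃X Y : V⦄ (g : X ⟶ Y), Mono g →
      ∃ T : D, ¬ IsZero T ∧ IsSplitMono (g ▷ I.obj T))
    {M N : V} (f : M ⟶ N) {X X' Y Y' : D}
    (α : I.obj X ⟶ M) (hα : Epi α) (α' : I.obj X' ⟶ N) (hα' : Epi α')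
    (β : M ⟶ I.obj Y) (hβ : Mono β) (β' : N ⟶ I.obj Y') (hβ' : Mono β') :
    ∃ (R S : D) (p : I.obj R ⟶ I.obj X) (p' : I.obj R ⟶ I.obj X')
      (q : I.obj Y ⟶ I.obj S) (q' : I.obj Y' ⟶ I.obj S),
      Epi p ∧ Mono q' ∧ p ≫ α ≫ f = p' ≫ α' ∧ β ≫ q = f ≫ β' ≫ q' :=
  deligne_presentations_nonempty_general I h2 f α α' hα' β hβ β'
end

section
/- Let 𝒯 be a tensor category, let g : M → M′ be an epimorphism in 𝒯, and let M′^* denote a dual of M′ with coevaluation coev : 𝟙 → M′ ⊗ M′^*. Let P be the pullback of g ⊗ id_{M′^*} : M ⊗ M′^* → M′ ⊗ M′^* along coev : 𝟙 → M′ ⊗ M′^*, with induced morphism π : P → 𝟙. If Z is an object of 𝒯 such that id_Z ⊗ π : Z ⊗ P → Z ⊗ 𝟙 is a split epimorphism, then id_Z ⊗ g : Z ⊗ M → Z ⊗ M′ is a split epimorphism. -/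
/-!
Transposing along the exact pairing `(M', Mdual)` turns `Z ◁ pr₁ : Z ⊗ P ⟶ Z ⊗ (M ⊗ Mdual)` into
a map `(Z ⊗ P) ⊗ M' ⟶ Z ⊗ M`. Transposition is natural, so the pullback square shows that this map
followed by `Z ◁ g` is the transpose of `Z ◁ coev`, which by the zigzag identity is
`(Z ◁ π) ▷ M'` up to unitors. The latter is split epi because `Z ◁ π` is, hence so is `Z ◁ g`.
-/

open CategoryTheory CategoryTheory.Limits CategoryTheory.MonoidalCategory

universe v₁ u₁

namespace CategoryTheory

theorem IsSplitEpi.of_comp {C : Type*} [Category C] {X Y Z : C} (f : X ⟶ Y) (g : Y ⟶ Z)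
    [IsSplitEpi (f ≫ g)] : IsSplitEpi g :=
  IsSplitEpi.mk' ⟨section_ (f ≫ g) ≫ f, by simp⟩

variable {C : Type*} [Category C] [MonoidalCategory C]

theorem tensorRightHomEquiv_symm_whiskerLeft_coevaluation (X Y Y' : C) [ExactPairing Y Y'] :
    (tensorRightHomEquiv _ Y Y' _).symm (X ◁ η_ Y Y' ≫ (α_ X Y Y').inv) = (ρ_ X).hom ▷ Y := by
  dsimp [tensorRightHomEquiv]
  calc _ = 𝟙 _ ⊗≫ X ◁ (η_ Y Y' ▷ Y ⊗≫ Y ◁ ε_ Y Y') ⊗≫ 𝟙 _ := by monoidal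
    _ = _ := by rw [ExactPairing.evaluation_coevaluation'']; monoidal

theorem isSplitEpi_of_comp_whiskerRight_eq_comp {X W B B' Y Y' : C} [ExactPairing Y Y']
    (h : B ⟶ B') (f : X ⟶ B ⊗ Y') (q : X ⟶ W) (k : W ⟶ B' ⊗ Y') (w : f ≫ h ▷ Y' = q ≫ k)
    (hk : IsSplitEpi (q ▷ Y ≫ (tensorRightHomEquiv W Y Y' B').symm k)) : IsSplitEpi h := by
  have transpose_comp : (tensorRightHomEquiv X Y Y' B).symm f ≫ h =
      q ▷ Y ≫ (tensorRightHomEquiv W Y Y' B').symm k := by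
    rw [← tensorRightHomEquiv_symm_naturality, ← w, Equiv.eq_symm_apply,
      tensorRightHomEquiv_naturality, Equiv.apply_symm_apply]
  rw [← transpose_comp] at hk
  exact IsSplitEpi.of_comp ((tensorRightHomEquiv X Y Y' B).symm f) h

theorem isSplitEpi_whiskerLeft_of_comp_eq_comp_coevaluation {M P Z Y Y' : C} [ExactPairing Y Y']
    (g : M ⟶ Y) (p : P ⟶ M ⊗ Y') (π : P ⟶ 𝟙_ C) (w : p ≫ g ▷ Y' = π ≫ η_ Y Y')
    (hπ : IsSplitEpi (Z ◁ π)) : IsSplitEpi (Z ◁ g) := by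
  have w' : (Z ◁ p ≫ (α_ Z M Y').inv) ≫ (Z ◁ g) ▷ Y' =
      Z ◁ π ≫ Z ◁ η_ Y Y' ≫ (α_ Z Y Y').inv := by
    rw [Category.assoc, ← associator_inv_naturality_middle, ← whiskerLeft_comp_assoc, w,
      whiskerLeft_comp_assoc]
  refine isSplitEpi_of_comp_whiskerRight_eq_comp (Y := Y) _ _ _ _ w' ?_
  rw [tensorRightHomEquiv_symm_whiskerLeft_coevaluation, ← comp_whiskerRight]
  exact inferInstanceAs (IsSplitEpi ((tensorRight Y).map _))

end CategoryTheory

theorem tensor_splitting_from_pullback_general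
    {T : Type u₁} [Category.{v₁} T] [Abelian T]
    [MonoidalCategory T]
    {M M' : T} (g : M ⟶ M') (Mdual : T) [ExactPairing M' Mdual]
    (Z : T)
    (hZ : IsSplitEpi (Z ◁ (pullback.snd (g ▷ Mdual) (η_ M' Mdual)))) :
    IsSplitEpi (Z ◁ g) :=
  isSplitEpi_whiskerLeft_of_comp_eq_comp_coevaluation g _ _ pullback.condition hZ

theorem tensor_splitting_from_pullback
    {T : Type u₁} [Category.{v₁} T] [Abelian T] [CategoryTheory.Linear ℂ T]
    [MonoidalCategory T] [SymmetricCategory T] [MonoidalPreadditive T]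
    [MonoidalLinear ℂ T] [RigidCategory T]
    (hT : Function.Bijective fun c : ℂ => c • (𝟙 (𝟙_ T)))
    {M M' : T} (g : M ⟶ M') [Epi g] (Mdual : T) [ExactPairing M' Mdual]
    (Z : T)
    (hZ : IsSplitEpi (Z ◁ (pullback.snd (g ▷ Mdual) (η_ M' Mdual)))) :
    IsSplitEpi (Z ◁ g) :=
  tensor_splitting_from_pullback_general g Mdual Z hZ
end
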